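/- The Demazure product descends to a monoid homomorphism m_* from the positive braid monoid Br⁺ of W to the monoid (W, *) such that m_*(s_i) = s_i for every simple reflection s_i. -/

import Mathlib

open CoxeterSystem

section DemazureAux

open List

variable {B : Type*} {W : Type*} [Group W] [DecidableEq W] {M : CoxeterMatrix B}
  (cs : CoxeterSystem M W)

/-- A purely group-theoretic fact: if `x * y * x = y` then `x ^ a * y * x ^ a = y`. -/
private lemma conj_pow_fix {G : Type*} [Group G] {x y : G} (h : x * y * x = y) :
    ∀ a : ℕ, x ^ a * y * x ^ a = y
  | 0 => by simp
  | (a + 1) => by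
    have ih := conj_pow_fix h a
    calc x ^ (a + 1) * y * x ^ (a + 1) = x ^ a * (x * y * x) * x ^ a := by
          rw [pow_succ]; group
      _ = y := by rw [h]; exact ih

private lemma simple_conj_fix (i j : B) (a : ℕ) :
    (cs.simple i * cs.simple j) ^ a * cs.simple j * (cs.simple i * cs.simple j) ^ a
      = cs.simple j :=
  conj_pow_fix (by simp [mul_assoc, cs.simple_mul_simple_cancel_left]) a

/-- The key entry formula:
`(π (alt i j n))⁻¹ * π (alt i j (n+1)) = s j * (s i * s j) ^ n`. -/
private lemma wordProd_alt_inv_mul (i j : B) (n : ℕ) :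
    (cs.wordProd (alternatingWord i j n))⁻¹ * cs.wordProd (alternatingWord i j (n + 1)) =
      cs.simple j * (cs.simple i * cs.simple j) ^ n := by
  rw [cs.prod_alternatingWord_eq_mul_pow, cs.prod_alternatingWord_eq_mul_pow]
  set c := cs.simple i * cs.simple j with hc
  have hcj : ∀ a : ℕ, c ^ a * cs.simple j * c ^ a = cs.simple j := by
    intro a
    have h := simple_conj_fix cs i j a
    rw [← hc] at h
    exact h
  rcases Nat.even_or_odd n with he | ho
  · obtain ⟨a, rfl⟩ := he
    rw [if_pos ⟨a, rfl⟩, if_neg (by rw [Nat.even_add_one]; exact not_not_intro ⟨a, rfl⟩)]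
    rw [show (a + a) / 2 = a from by omega, show (a + a + 1) / 2 = a from by omega, one_mul]
    refine mul_left_cancel (a := c ^ a) ?_
    calc c ^ a * ((c ^ a)⁻¹ * (cs.simple j * c ^ a)) = cs.simple j * c ^ a := by group
      _ = (c ^ a * cs.simple j * c ^ a) * c ^ a := by rw [hcj a]
      _ = c ^ a * (cs.simple j * (c ^ a * c ^ a)) := by group
      _ = c ^ a * (cs.simple j * c ^ (a + a)) := by rw [← pow_add]
  · obtain ⟨a, rfl⟩ := ho
    rw [if_neg (Nat.not_even_iff_odd.mpr ⟨a, rfl⟩), if_pos ⟨a + 1, by ring⟩]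
    rw [show (2 * a + 1) / 2 = a from by omega, show (2 * a + 1 + 1) / 2 = a + 1 from by omega,
      one_mul]
    refine mul_left_cancel (a := cs.simple j * c ^ a) ?_
    calc (cs.simple j * c ^ a) * ((cs.simple j * c ^ a)⁻¹ * c ^ (a + 1)) = c ^ (a + 1) := by
          group
      _ = cs.simple j * (cs.simple j * c ^ (a + 1)) := by rw [cs.simple_mul_simple_cancel_left]
      _ = cs.simple j * ((c ^ a * cs.simple j * c ^ a) * c ^ (a + 1)) := by rw [hcj a]
      _ = (cs.simple j * c ^ a) * (cs.simple j * (c ^ a * c ^ (a + 1))) := by group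
      _ = (cs.simple j * c ^ a) * (cs.simple j * c ^ (2 * a + 1)) := by
          rw [← pow_add, show a + (a + 1) = 2 * a + 1 from by ring]

/-- The right inversion sequence of an alternating word, explicitly. -/
private lemma rightInvSeq_alternatingWord (i j : B) :
    ∀ n : ℕ, cs.rightInvSeq (alternatingWord i j n) =
      ((List.range n).reverse).map (fun k => cs.simple j * (cs.simple i * cs.simple j) ^ k)
  | 0 => by simp [alternatingWord]
  | (n + 1) => by
    have ih := rightInvSeq_alternatingWord i j n
    rw [alternatingWord_succ']
    rw [show cs.rightInvSeq ((if Even n then j else i) :: alternatingWord i j n) =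
        ((cs.wordProd (alternatingWord i j n))⁻¹ * cs.simple (if Even n then j else i) *
          cs.wordProd (alternatingWord i j n)) :: cs.rightInvSeq (alternatingWord i j n) from rfl]
    have hhead : (cs.wordProd (alternatingWord i j n))⁻¹ * cs.simple (if Even n then j else i) *
        cs.wordProd (alternatingWord i j n) = cs.simple j * (cs.simple i * cs.simple j) ^ n := by
      have h1 : cs.wordProd (alternatingWord i j (n + 1)) =
          cs.simple (if Even n then j else i) * cs.wordProd (alternatingWord i j n) := by
        rw [alternatingWord_succ', wordProd_cons]
      have := wordProd_alt_inv_mul cs i j n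
      rw [h1] at this
      rw [mul_assoc]
      exact this
    rw [hhead, ih, range_succ, reverse_append]
    simp

/-- The sign-tracking permutation associated to a simple reflection. -/
private def dsigFun (i : B) : W × ℤˣ → W × ℤˣ :=
  fun p => (cs.simple i * p.1 * cs.simple i, if p.1 = cs.simple i then -p.2 else p.2)

private lemma dsigFun_invol (i : B) (p : W × ℤˣ) : dsigFun cs i (dsigFun cs i p) = p := by
  obtain ⟨t, e⟩ := p
  have h1 : cs.simple i * (cs.simple i * t * cs.simple i) * cs.simple i = t := by
    simp [mul_assoc, cs.simple_mul_simple_cancel_left, cs.simple_mul_simple_self]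
  have h2 : (cs.simple i * t * cs.simple i = cs.simple i) ↔ t = cs.simple i := by
    constructor
    · intro h
      have h3 : t = cs.simple i * cs.simple i * cs.simple i := by
        conv_lhs => rw [← h1, h]
      simpa [cs.simple_mul_simple_self] using h3
    · rintro rfl
      simp [cs.simple_mul_simple_self]
  by_cases ht : t = cs.simple i
  · simp [dsigFun, ht, h1, h2]
  · simp [dsigFun, ht, h1, h2]

private noncomputable def dsig (i : B) : Equiv.Perm (W × ℤˣ) :=
  ⟨dsigFun cs i, dsigFun cs i, dsigFun_invol cs i, dsigFun_invol cs i⟩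

private lemma dsig_apply (i : B) (t : W) (e : ℤˣ) :
    dsig cs i (t, e) = (cs.simple i * t * cs.simple i,
      if t = cs.simple i then -e else e) := rfl

/-- Evaluation of the product of the sign permutations along a word. -/
private lemma dsig_prod_apply (ω : List B) (t : W) (e : ℤˣ) :
    ((ω.map (dsig cs)).prod) (t, e) =
      (cs.wordProd ω * t * (cs.wordProd ω)⁻¹,
        (-1 : ℤˣ) ^ (List.count t (cs.rightInvSeq ω)) * e) := by
  induction ω with
  | nil => simp [CoxeterSystem.rightInvSeq]
  | cons i ω ih =>
    rw [List.map_cons, List.prod_cons, Equiv.Perm.mul_apply, ih, dsig_apply]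
    rw [show cs.rightInvSeq (i :: ω) =
        ((cs.wordProd ω)⁻¹ * cs.simple i * cs.wordProd ω) :: cs.rightInvSeq ω from rfl]
    have hcond : (cs.wordProd ω * t * (cs.wordProd ω)⁻¹ = cs.simple i) ↔
        ((cs.wordProd ω)⁻¹ * cs.simple i * cs.wordProd ω = t) := by
      constructor
      · intro h; rw [← h]; group
      · intro h; rw [← h]; group
    have hfst : cs.simple i * (cs.wordProd ω * t * (cs.wordProd ω)⁻¹) * cs.simple i =
        cs.wordProd (i :: ω) * t * (cs.wordProd (i :: ω))⁻¹ := by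
      rw [wordProd_cons, mul_inv_rev, cs.inv_simple]
      group
    by_cases hc : (cs.wordProd ω)⁻¹ * cs.simple i * cs.wordProd ω = t
    · rw [if_pos (hcond.mpr hc)]
      refine Prod.ext hfst ?_
      simp [List.count_cons, hc, pow_add, pow_succ, mul_assoc]
    · rw [if_neg (fun h => hc (hcond.mp h))]
      refine Prod.ext hfst ?_
      simp [List.count_cons, hc]

private lemma dsig_prod_alt (i j : B) :
    ∀ m : ℕ, ((alternatingWord i j (2 * m)).map (dsig cs)).prod = (dsig cs i * dsig cs j) ^ m
  | 0 => by simp [alternatingWord]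
  | (m + 1) => by
    have ih := dsig_prod_alt i j m
    have h2 : 2 * (m + 1) = (2 * m + 1) + 1 := by ring
    rw [h2, alternatingWord_succ', alternatingWord_succ']
    rw [if_neg (by rw [Nat.even_add_one]; exact not_not_intro (even_two_mul m)),
      if_pos (even_two_mul m)]
    rw [List.map_cons, List.map_cons, List.prod_cons, List.prod_cons, ih, pow_succ']
    rw [mul_assoc]

private lemma isLiftable_dsig : M.IsLiftable (dsig cs) := by
  intro i j
  apply Equiv.ext
  rintro ⟨t, e⟩
  rw [← dsig_prod_alt cs i j (M i j), dsig_prod_apply]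
  have hπ : cs.wordProd (alternatingWord i j (2 * M i j)) = 1 := by
    rw [cs.prod_alternatingWord_eq_mul_pow, if_pos (even_two_mul (M i j)), one_mul,
      Nat.mul_div_cancel_left _ (by norm_num : 0 < 2)]
    exact cs.simple_mul_simple_pow i j
  have hcnt : List.count t (cs.rightInvSeq (alternatingWord i j (2 * M i j))) =
      List.count t ((List.range (M i j)).map
          (fun k => cs.simple j * (cs.simple i * cs.simple j) ^ k)) +
        List.count t ((List.range (M i j)).map
          (fun k => cs.simple j * (cs.simple i * cs.simple j) ^ k)) := by
    rw [rightInvSeq_alternatingWord cs i j, List.map_reverse, List.count_reverse,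
      two_mul, List.range_add, List.map_append, List.count_append]
    congr 2
    rw [List.map_map]
    refine List.map_congr_left (fun k _ => ?_)
    show cs.simple j * (cs.simple i * cs.simple j) ^ (M i j + k) = _
    rw [pow_add, cs.simple_mul_simple_pow i j, one_mul]
  rw [hπ, hcnt, pow_add, Int.units_mul_self, one_mul]
  simp

private noncomputable def dphi : W →* Equiv.Perm (W × ℤˣ) :=
  cs.lift ⟨dsig cs, isLiftable_dsig cs⟩

private lemma dphi_wordProd (ω : List B) :
    dphi cs (cs.wordProd ω) = ((ω.map (dsig cs))).prod := by
  show dphi cs (List.prod (List.map cs.simple ω)) = _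
  rw [map_list_prod, List.map_map]
  congr 1
  refine List.map_congr_left (fun k _ => ?_)
  exact cs.lift_apply_simple (isLiftable_dsig cs) k

/-- Parity of the count of `t` in the right inversion sequence only depends on the product. -/
private lemma count_ris_parity {ω ω' : List B} (h : cs.wordProd ω = cs.wordProd ω') (t : W) :
    ((-1 : ℤˣ)) ^ (List.count t (cs.rightInvSeq ω)) =
      (-1) ^ (List.count t (cs.rightInvSeq ω')) := by
  have e1 := dsig_prod_apply cs ω t 1
  have e2 := dsig_prod_apply cs ω' t 1
  rw [← dphi_wordProd cs ω] at e1
  rw [← dphi_wordProd cs ω'] at e2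
  rw [h] at e1
  have := congrArg Prod.snd (e1.symm.trans e2)
  simpa using this

private lemma odd_of_neg_one_pow {n : ℕ} (h : ((-1 : ℤˣ)) ^ n = -1) : Odd n := by
  rcases Nat.even_or_odd n with he | ho
  · exfalso
    obtain ⟨a, rfl⟩ := he
    rw [pow_add, Int.units_mul_self] at h
    have := congrArg Units.val h
    norm_num at this
  · exact ho

/-- If `s k` is a right descent of `π ω`, then `s k` occurs an odd number of times in the
right inversion sequence of `ω` (for an arbitrary word `ω`). -/
private lemma odd_count_ris_of_descent {ω : List B} {k : B}
    (h : cs.length (cs.wordProd ω * cs.simple k) < cs.length (cs.wordProd ω)) :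
    Odd (List.count (cs.simple k) (cs.rightInvSeq ω)) := by
  obtain ⟨τ, hτlen, hτ⟩ := cs.exists_reduced_word (cs.wordProd ω * cs.simple k)
  have hπ : cs.wordProd (τ.concat k) = cs.wordProd ω := by
    rw [wordProd_concat, ← hτ, cs.simple_mul_simple_cancel_right]
  have hlen : cs.length (cs.wordProd ω * cs.simple k) + 1 = cs.length (cs.wordProd ω) := by
    rcases cs.length_mul_simple (cs.wordProd ω) k with hc | hc
    · omega
    · omega
  have hred : cs.IsReduced (τ.concat k) := by
    unfold CoxeterSystem.IsReduced
    rw [hπ, List.length_concat, ← (show cs.length (cs.wordProd τ) = τ.length from hτlen), ← hτ]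
    omega
  have hmem : cs.simple k ∈ cs.rightInvSeq (τ.concat k) := by
    rw [cs.rightInvSeq_concat]
    simp
  have hcnt : List.count (cs.simple k) (cs.rightInvSeq (τ.concat k)) = 1 :=
    List.count_eq_one_of_mem (hred.nodup_rightInvSeq cs) hmem
  have hpar := count_ris_parity cs hπ (cs.simple k)
  rw [hcnt, pow_one] at hpar
  exact odd_of_neg_one_pow (hpar.symm)

/-- Alternating words of length at most the order of `s i * s j` are reduced. -/
private lemma isReduced_alternatingWord_of_le_orderOf :
    ∀ (n : ℕ) (i j : B), n ≤ orderOf (cs.simple i * cs.simple j) →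
      cs.IsReduced (alternatingWord i j n) := by
  intro n
  induction n with
  | zero =>
    intro i j _
    have h0 : alternatingWord i j 0 = [] := rfl
    rw [h0]
    unfold CoxeterSystem.IsReduced
    simp
  | succ n ih =>
    intro i j hn
    have hswap : cs.simple j * cs.simple i = (cs.simple i * cs.simple j)⁻¹ := by
      rw [mul_inv_rev, cs.inv_simple, cs.inv_simple]
    have hord : orderOf (cs.simple j * cs.simple i) = orderOf (cs.simple i * cs.simple j) := by
      rw [hswap, orderOf_inv]
    have hy : cs.IsReduced (alternatingWord j i n) := ih j i (by omega)
    have hlen_y : cs.length (cs.wordProd (alternatingWord j i n)) = n := by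
      unfold CoxeterSystem.IsReduced at hy
      rwa [length_alternatingWord] at hy
    have hx : cs.wordProd (alternatingWord i j (n + 1)) =
        cs.wordProd (alternatingWord j i n) * cs.simple j := by
      rw [alternatingWord_succ, wordProd_concat]
    rcases cs.length_mul_simple (cs.wordProd (alternatingWord j i n)) j with hc | hc
    · unfold CoxeterSystem.IsReduced
      rw [length_alternatingWord, hx, hc, hlen_y]
    · exfalso
      have hdesc : cs.length (cs.wordProd (alternatingWord j i n) * cs.simple j) <
          cs.length (cs.wordProd (alternatingWord j i n)) := by omega
      have hodd := odd_count_ris_of_descent cs hdesc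
      rw [rightInvSeq_alternatingWord cs j i n] at hodd
      have hpos : 0 < List.count (cs.simple j)
          (((List.range n).reverse).map (fun k => cs.simple i * (cs.simple j * cs.simple i) ^ k)) := by
        rcases hodd with ⟨r, hr⟩
        omega
      have hmem := List.count_pos_iff.mp hpos
      obtain ⟨k, hk, hfk⟩ := List.mem_map.mp hmem
      rw [List.mem_reverse, List.mem_range] at hk
      -- hfk : s i * (s j * s i) ^ k = s j
      have h1 : ((cs.simple i * cs.simple j) ^ k)⁻¹ =
          (cs.simple j * cs.simple i) ^ k := by
        rw [hswap, inv_pow]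
      have h3 : (cs.simple j * cs.simple i) ^ k = cs.simple i * cs.simple j := by
        have h4 := congrArg (fun x => cs.simple i * x) hfk
        simp only [← mul_assoc, cs.simple_mul_simple_self, one_mul] at h4
        exact h4
      have h2 : ((cs.simple i * cs.simple j) ^ k)⁻¹ = cs.simple i * cs.simple j :=
        h1.trans h3
      have h5 : (cs.simple i * cs.simple j) ^ (k + 1) = 1 := by
        calc (cs.simple i * cs.simple j) ^ (k + 1)
            = (cs.simple i * cs.simple j) ^ k * (cs.simple i * cs.simple j) := pow_succ _ _
          _ = (cs.simple i * cs.simple j) ^ k * ((cs.simple i * cs.simple j) ^ k)⁻¹ := by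
              rw [h2]
          _ = 1 := by simp
      have hdvd := orderOf_dvd_of_pow_eq_one h5
      have hle : orderOf (cs.simple i * cs.simple j) ≤ k + 1 := Nat.le_of_dvd (by omega) hdvd
      omega

/-- The two alternating words of length `orderOf (s i * s j)` have the same product. -/
private lemma wordProd_alt_orderOf_eq (i j : B) :
    cs.wordProd (alternatingWord i j (orderOf (cs.simple i * cs.simple j))) =
      cs.wordProd (alternatingWord j i (orderOf (cs.simple i * cs.simple j))) := by
  have hc : (cs.simple i * cs.simple j) ^ (orderOf (cs.simple i * cs.simple j)) = 1 :=
    pow_orderOf_eq_one _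
  have hswap : cs.simple j * cs.simple i = (cs.simple i * cs.simple j)⁻¹ := by
    rw [mul_inv_rev, cs.inv_simple, cs.inv_simple]
  set d := orderOf (cs.simple i * cs.simple j) with hd
  rw [cs.prod_alternatingWord_eq_mul_pow, cs.prod_alternatingWord_eq_mul_pow, hswap, inv_pow]
  rcases Nat.even_or_odd d with he | ho
  · obtain ⟨a, ha⟩ := he
    rw [if_pos ⟨a, ha⟩, if_pos ⟨a, ha⟩, one_mul, one_mul]
    have key : (cs.simple i * cs.simple j) ^ (d / 2) * (cs.simple i * cs.simple j) ^ (d / 2) = 1 := by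
      rw [← pow_add, show d / 2 + d / 2 = d from by omega, hc]
    exact eq_inv_of_mul_eq_one_left key
  · obtain ⟨a, ha⟩ := ho
    rw [if_neg (Nat.not_even_iff_odd.mpr ⟨a, ha⟩), if_neg (Nat.not_even_iff_odd.mpr ⟨a, ha⟩)]
    rw [show d / 2 = a from by omega]
    -- goal:  s j * c^a = s i * (c^a)⁻¹
    have key : (cs.simple i * cs.simple j) ^ (a + 1) * (cs.simple i * cs.simple j) ^ a = 1 := by
      rw [← pow_add, show a + 1 + a = d from by omega, hc]
    have h1 : (cs.simple i * cs.simple j) ^ (a + 1) = ((cs.simple i * cs.simple j) ^ a)⁻¹ :=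
      eq_inv_of_mul_eq_one_left key
    have h2 : cs.simple i * (cs.simple j * (cs.simple i * cs.simple j) ^ a) =
        ((cs.simple i * cs.simple j) ^ a)⁻¹ := by
      rw [← h1, pow_succ']
      group
    calc cs.simple j * (cs.simple i * cs.simple j) ^ a
        = cs.simple i * (cs.simple i * (cs.simple j * (cs.simple i * cs.simple j) ^ a)) := by
          rw [cs.simple_mul_simple_cancel_left]
      _ = cs.simple i * ((cs.simple i * cs.simple j) ^ a)⁻¹ := by rw [h2]

end DemazureAux

/-- The braid relations on the free monoid over the generator set `B`:
for each pair `i j`, the alternating word of length `M i j` in `i, j` is identified with the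
alternating word of length `M i j` in `j, i`. -/
def braidRel {B : Type*} (M : CoxeterMatrix B) : FreeMonoid B → FreeMonoid B → Prop :=
  fun a b => ∃ i j : B,
    a = FreeMonoid.ofList (alternatingWord i j (M i j)) ∧
    b = FreeMonoid.ofList (alternatingWord j i (M i j))

/-- The positive braid monoid `Br⁺` of the Coxeter system: the free monoid on `B` modulo the
congruence generated by the braid relations. -/
def BraidMonoid {B : Type*} (M : CoxeterMatrix B) := (conGen (braidRel M)).Quotient

noncomputable instance {B : Type*} (M : CoxeterMatrix B) : Monoid (BraidMonoid M) :=
  inferInstanceAs (Monoid (conGen (braidRel M)).Quotient)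

/-- **The Demazure product descends to a monoid homomorphism `m_* : Br⁺ → (W, *)`.**
If `star` is the Demazure product on `W` (characterized by its two defining properties together
with associativity and unitality), then there is a map `f : Br⁺ → W` which is a monoid
homomorphism to `(W, star)` and sends each braid generator to the corresponding simple
reflection. -/
theorem demazure_descends_to_braid_monoid {B : Type*} {W : Type*} [Group W]
    {M : CoxeterMatrix B} (cs : CoxeterSystem M W) (star : W → W → W)
    (hadd : ∀ x y : W, cs.length (x * y) = cs.length x + cs.length y → star x y = x * y)
    (hs : ∀ (i : B) (w : W), cs.length (cs.simple i * w) < cs.length w →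
      star (cs.simple i) w = w)
    (hassoc : ∀ x y z : W, star (star x y) z = star x (star y z))
    (hone : ∀ x : W, star 1 x = x ∧ star x 1 = x) :
    ∃ f : BraidMonoid M → W,
      f 1 = 1 ∧
      (∀ a b : BraidMonoid M, f (a * b) = star (f a) (f b)) ∧
      (∀ i : B, f ((conGen (braidRel M)).mk' (FreeMonoid.of i)) = cs.simple i) := by
  classical
  -- basic right-multiplication behaviour of the Demazure product
  have SB1 : ∀ (w : W) (k : B), cs.length (w * cs.simple k) = cs.length w + 1 →
      star w (cs.simple k) = w * cs.simple k := by
    intro w k h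
    exact hadd w (cs.simple k) (by rw [h, cs.length_simple])
  have SB2 : ∀ (w : W) (k : B), cs.length (w * cs.simple k) < cs.length w →
      star w (cs.simple k) = w := by
    intro w k h
    have hss : star (cs.simple k) (cs.simple k) = cs.simple k := by
      refine hs k (cs.simple k) ?_
      rw [cs.simple_mul_simple_self, cs.length_one, cs.length_simple]
      omega
    have hu : star (w * cs.simple k) (cs.simple k) = w := by
      have hlen : cs.length ((w * cs.simple k) * cs.simple k) =
          cs.length (w * cs.simple k) + cs.length (cs.simple k) := by
        rw [cs.simple_mul_simple_cancel_right, cs.length_simple]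
        rcases cs.length_mul_simple w k with hc | hc
        · omega
        · omega
      have := hadd _ _ hlen
      rwa [cs.simple_mul_simple_cancel_right] at this
    conv_lhs => rw [← hu]
    rw [hassoc, hss, hu]
  -- the star-fold along a word
  set G : List B → W := fun l => List.foldl (fun w k => star w (cs.simple k)) 1 l with hGdef
  have Gconcat : ∀ (l : List B) (k : B), G (l ++ [k]) = star (G l) (cs.simple k) := by
    intro l k
    simp [hGdef, List.foldl_concat]
  have Gmul : ∀ l₁ l₂ : List B, G (l₁ ++ l₂) = star (G l₁) (G l₂) := by
    intro l₁ l₂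
    induction l₂ using List.reverseRecOn with
    | nil =>
      rw [List.append_nil]
      exact ((hone (G l₁)).2).symm
    | append_singleton l a ih =>
      rw [← List.append_assoc, Gconcat, Gconcat, ih, hassoc]
  -- the key dihedral fold computation
  have FO : ∀ (i j : B), 0 < orderOf (cs.simple i * cs.simple j) → ∀ n : ℕ,
      G (alternatingWord i j n) =
        cs.wordProd (alternatingWord i j (min n (orderOf (cs.simple i * cs.simple j)))) ∧
      G (alternatingWord j i n) =
        cs.wordProd (alternatingWord j i (min n (orderOf (cs.simple i * cs.simple j)))) := by
    intro i j hd
    set d := orderOf (cs.simple i * cs.simple j) with hdd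
    have hord : orderOf (cs.simple j * cs.simple i) = d := by
      rw [hdd, show cs.simple j * cs.simple i = (cs.simple i * cs.simple j)⁻¹ from by
        rw [mul_inv_rev, cs.inv_simple, cs.inv_simple], orderOf_inv]
    have hr1 : ∀ m, m ≤ d → cs.length (cs.wordProd (alternatingWord i j m)) = m := by
      intro m hm
      have h := isReduced_alternatingWord_of_le_orderOf cs m i j (by omega)
      unfold CoxeterSystem.IsReduced at h
      rwa [length_alternatingWord] at h
    have hr2 : ∀ m, m ≤ d → cs.length (cs.wordProd (alternatingWord j i m)) = m := by
      intro m hm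
      have h := isReduced_alternatingWord_of_le_orderOf cs m j i (by omega)
      unfold CoxeterSystem.IsReduced at h
      rwa [length_alternatingWord] at h
    have hD2 : cs.wordProd (alternatingWord i j d) = cs.wordProd (alternatingWord j i d) := by
      have := wordProd_alt_orderOf_eq cs i j
      rwa [← hdd] at this
    intro n
    induction n with
    | zero =>
      rw [Nat.zero_min]
      exact ⟨(cs.wordProd_nil).symm, (cs.wordProd_nil).symm⟩
    | succ n ih =>
      obtain ⟨ih1, ih2⟩ := ih
      rcases lt_or_ge n d with hlt | hge
      · rw [min_eq_left (le_of_lt hlt)] at ih1 ih2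
        have hmin1 : min (n + 1) d = n + 1 := min_eq_left (by omega)
        rw [hmin1]
        constructor
        · conv_lhs => rw [alternatingWord_succ i j, List.concat_eq_append]
          rw [Gconcat, ih2]
          have hx : cs.wordProd (alternatingWord j i n) * cs.simple j =
              cs.wordProd (alternatingWord i j (n + 1)) := by
            conv_rhs => rw [alternatingWord_succ i j, wordProd_concat]
          rw [SB1 _ j (by rw [hx, hr1 (n + 1) (by omega), hr2 n (by omega)]), hx]
        · conv_lhs => rw [alternatingWord_succ j i, List.concat_eq_append]
          rw [Gconcat, ih1]
          have hx : cs.wordProd (alternatingWord i j n) * cs.simple i =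
              cs.wordProd (alternatingWord j i (n + 1)) := by
            conv_rhs => rw [alternatingWord_succ j i, wordProd_concat]
          rw [SB1 _ i (by rw [hx, hr2 (n + 1) (by omega), hr1 n (by omega)]), hx]
      · rw [min_eq_right hge] at ih1 ih2
        have hmin1 : min (n + 1) d = d := min_eq_right (by omega)
        rw [hmin1]
        have hd1 : d - 1 + 1 = d := by omega
        constructor
        · conv_lhs => rw [alternatingWord_succ i j, List.concat_eq_append]
          rw [Gconcat, ih2]
          have e1 : cs.wordProd (alternatingWord j i d) * cs.simple j =
              cs.wordProd (alternatingWord j i (d - 1)) := by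
            conv_lhs => rw [← hD2, ← hd1, alternatingWord_succ i j, wordProd_concat]
            rw [cs.simple_mul_simple_cancel_right]
          have hlen : cs.length (cs.wordProd (alternatingWord j i d) * cs.simple j) <
              cs.length (cs.wordProd (alternatingWord j i d)) := by
            rw [e1, hr2 (d - 1) (by omega), hr2 d le_rfl]
            omega
          rw [SB2 _ j hlen]
          exact hD2.symm
        · conv_lhs => rw [alternatingWord_succ j i, List.concat_eq_append]
          rw [Gconcat, ih1]
          have e2 : cs.wordProd (alternatingWord i j d) * cs.simple i =
              cs.wordProd (alternatingWord i j (d - 1)) := by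
            conv_lhs => rw [hD2, ← hd1, alternatingWord_succ j i, wordProd_concat]
            rw [cs.simple_mul_simple_cancel_right]
          have hlen : cs.length (cs.wordProd (alternatingWord i j d) * cs.simple i) <
              cs.length (cs.wordProd (alternatingWord i j d)) := by
            rw [e2, hr1 (d - 1) (by omega), hr1 d le_rfl]
            omega
          rw [SB2 _ i hlen]
          exact hD2
  -- invariance of the fold under the braid relations
  have HB : ∀ i j : B, G (alternatingWord i j (M i j)) = G (alternatingWord j i (M i j)) := by
    intro i j
    by_cases hM : M i j = 0
    · rw [hM]
      rfl
    · have hpow := cs.simple_mul_simple_pow i j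
      have hdvd := orderOf_dvd_of_pow_eq_one hpow
      have hdpos : 0 < orderOf (cs.simple i * cs.simple j) := by
        rcases Nat.eq_zero_or_pos (orderOf (cs.simple i * cs.simple j)) with h0 | h
        · rw [h0] at hdvd
          exact absurd (Nat.eq_zero_of_zero_dvd hdvd) hM
        · exact h
      have hdle : orderOf (cs.simple i * cs.simple j) ≤ M i j :=
        Nat.le_of_dvd (by omega) hdvd
      obtain ⟨h1, h2⟩ := FO i j hdpos (M i j)
      rw [h1, h2, min_eq_right hdle]
      have := wordProd_alt_orderOf_eq cs i j
      exact this
  -- assemble the homomorphism out of the braid monoid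
  set gF : FreeMonoid B → W := fun a => G (FreeMonoid.toList a) with hgF
  have Fmul : ∀ a b : FreeMonoid B, gF (a * b) = star (gF a) (gF b) := by
    intro a b
    show G (FreeMonoid.toList (a * b)) = star (G (FreeMonoid.toList a)) (G (FreeMonoid.toList b))
    rw [FreeMonoid.toList_mul]
    exact Gmul _ _
  have hrel : ∀ a b : FreeMonoid B, (conGen (braidRel M)) a b → gF a = gF b := by
    intro a b h
    induction h with
    | of x y hxy =>
      obtain ⟨i, j, hx, hy⟩ := hxy
      rw [hx, hy]
      exact HB i j
    | refl x => rfl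
    | symm _ ih => exact ih.symm
    | trans _ _ ih1 ih2 => exact ih1.trans ih2
    | mul _ _ ih1 ih2 =>
      rw [Fmul, Fmul, ih1, ih2]
  refine ⟨fun q => Con.liftOn q gF hrel, ?_, ?_, ?_⟩
  · show gF 1 = 1
    rfl
  · intro a b
    refine Con.induction_on₂ a b (fun x y => ?_)
    show gF (x * y) = star (gF x) (gF y)
    exact Fmul x y
  · intro i
    show gF (FreeMonoid.of i) = cs.simple i
    show star 1 (cs.simple i) = cs.simple i
    exact (hone (cs.simple i)).1
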